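/- arXiv:2105.07511 — 4 statements merged into one kernel-verified Lean document; each statement's English description precedes it below -/
import Mathlib

section
/- For a static attack tree with proper tree structure (the BAS sets of the two children of any gate are disjoint), the minimal successful attacks of OR(v₁,v₂) are exactly the union of the minimal successful attacks of v₁ and of v₂. -/
/-- Static attack trees over a set `β` of basic attack steps. -/
inductive SAT (β : Type) : Type where
  | bas : β → SAT β
  | or : SAT β → SAT β → SAT β
  | and : SAT β → SAT β → SAT β

/-- Structure function: does attack `A` succeed at the (root of the) tree? -/
def SAT.sf {β : Type} : SAT β → Set β → Prop
  | .bas a, A => a ∈ A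
  | .or t₁ t₂, A => t₁.sf A ∨ t₂.sf A
  | .and t₁ t₂, A => t₁.sf A ∧ t₂.sf A

/-- `A` is a minimal successful attack at `t`. -/
def SAT.minimalAttack {β : Type} (t : SAT β) (A : Set β) : Prop :=
  t.sf A ∧ ∀ B ⊂ A, ¬ t.sf B

/-- Semantics: the set of minimal successful attacks. -/
def SAT.sem {β : Type} (t : SAT β) : Set (Set β) := {A | t.minimalAttack A}

/-- BAS leaves occurring in the tree. -/
def SAT.leaves {β : Type} : SAT β → Set β
  | .bas a => {a}
  | .or t₁ t₂ => t₁.leaves ∪ t₂.leaves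
  | .and t₁ t₂ => t₁.leaves ∪ t₂.leaves

/-- Proper tree structure: the BAS sets of the two children of any gate are disjoint. -/
def SAT.isTree {β : Type} : SAT β → Prop
  | .bas _ => True
  | .or t₁ t₂ => t₁.isTree ∧ t₂.isTree ∧ Disjoint t₁.leaves t₂.leaves
  | .and t₁ t₂ => t₁.isTree ∧ t₂.isTree ∧ Disjoint t₁.leaves t₂.leaves

lemma SAT.sf_congr {β : Type} (t : SAT β) {A B : Set β}
    (h : A ∩ t.leaves = B ∩ t.leaves) : t.sf A ↔ t.sf B := by
  induction t with
  | bas a =>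
      have := Set.ext_iff.mp h a
      simp [SAT.leaves] at this
      simpa [SAT.sf] using this
  | or t₁ t₂ ih₁ ih₂ =>
      have h₁ : A ∩ t₁.leaves = B ∩ t₁.leaves := by
        have := congrArg (· ∩ t₁.leaves) h
        simp only [SAT.leaves] at this
        rw [Set.inter_assoc, Set.inter_assoc, Set.union_inter_cancel_left] at this
        exact this
      have h₂ : A ∩ t₂.leaves = B ∩ t₂.leaves := by
        have := congrArg (· ∩ t₂.leaves) h
        simp only [SAT.leaves] at this
        rw [Set.inter_assoc, Set.inter_assoc, Set.union_inter_cancel_right] at this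
        exact this
      simp [SAT.sf, ih₁ h₁, ih₂ h₂]
  | and t₁ t₂ ih₁ ih₂ =>
      have h₁ : A ∩ t₁.leaves = B ∩ t₁.leaves := by
        have := congrArg (· ∩ t₁.leaves) h
        simp only [SAT.leaves] at this
        rw [Set.inter_assoc, Set.inter_assoc, Set.union_inter_cancel_left] at this
        exact this
      have h₂ : A ∩ t₂.leaves = B ∩ t₂.leaves := by
        have := congrArg (· ∩ t₂.leaves) h
        simp only [SAT.leaves] at this
        rw [Set.inter_assoc, Set.inter_assoc, Set.union_inter_cancel_right] at this
        exact this
      simp [SAT.sf, ih₁ h₁, ih₂ h₂]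

lemma SAT.not_sf_empty {β : Type} (t : SAT β) : ¬ t.sf ∅ := by
  induction t with
  | bas a => simp [SAT.sf]
  | or t₁ t₂ ih₁ ih₂ => simp [SAT.sf, ih₁, ih₂]
  | and t₁ t₂ ih₁ ih₂ => simp [SAT.sf, ih₁, ih₂]

lemma SAT.minimal_subset_leaves {β : Type} {t : SAT β} {A : Set β}
    (h : t.minimalAttack A) : A ⊆ t.leaves := by
  by_contra hsub
  obtain ⟨x, hxA, hxl⟩ := Set.not_subset.mp hsub
  have hcongr : A ∩ t.leaves = (A ∩ t.leaves) ∩ t.leaves := by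
    rw [Set.inter_assoc, Set.inter_self]
  have hsf : t.sf (A ∩ t.leaves) := (t.sf_congr hcongr).mp h.1
  have hss : A ∩ t.leaves ⊂ A := by
    constructor
    · exact Set.inter_subset_left
    · intro hle
      exact hxl (hle hxA).2
  exact h.2 _ hss hsf

/-- for tree-structured static ATs,
the minimal attacks of `OR(v₁,v₂)` are the union of those of `v₁` and of `v₂`. -/
theorem stmt1 {β : Type} (v₁ v₂ : SAT β) (ht : (SAT.or v₁ v₂).isTree) :
    (SAT.or v₁ v₂).sem = v₁.sem ∪ v₂.sem := by
  obtain ⟨ht₁, ht₂, hdisj⟩ := ht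
  ext A
  constructor
  · rintro ⟨hsf, hmin⟩
    cases hsf with
    | inl h => exact Or.inl ⟨h, fun B hB hsfB => hmin B hB (Or.inl hsfB)⟩
    | inr h => exact Or.inr ⟨h, fun B hB hsfB => hmin B hB (Or.inr hsfB)⟩
  · intro h
    have key : ∀ (w₁ w₂ : SAT β), Disjoint w₁.leaves w₂.leaves →
        A ∈ w₁.sem → w₁.sf A ∧ ∀ B ⊂ A, ¬ w₂.sf B := by
      intro w₁ w₂ hd ⟨hsf, hmin⟩
      refine ⟨hsf, fun B hB hsfB => ?_⟩
      have hBleaves : B ⊆ w₁.leaves :=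
        hB.1.trans (SAT.minimal_subset_leaves ⟨hsf, hmin⟩)
      have hempty : B ∩ w₂.leaves = (∅ : Set β) ∩ w₂.leaves := by
        rw [Set.empty_inter]
        exact Set.disjoint_iff_inter_eq_empty.mp
          (Set.disjoint_of_subset_left hBleaves hd)
      exact w₂.not_sf_empty ((w₂.sf_congr hempty).mp hsfB)
    cases h with
    | inl h =>
        obtain ⟨hsf, hnot⟩ := key v₁ v₂ hdisj h
        exact ⟨Or.inl hsf, fun B hB => by
          rintro (h1 | h2)
          · exact h.2 B hB h1
          · exact hnot B hB h2⟩
    | inr h =>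
        obtain ⟨hsf, hnot⟩ := key v₂ v₁ hdisj.symm h
        exact ⟨Or.inr hsf, fun B hB => by
          rintro (h1 | h2)
          · exact hnot B hB h1
          · exact h.2 B hB h2⟩
end

section
/- Bottom-up evaluation can be incorrect on DAG-structured static attack trees: for the attack tree T = AND(OR(a,b), OR(b,c)) with shared leaf b, attribution α(a)=3, α(b)=1, α(c)=4 and the min-cost domain (ℕ∞, min, +), the bottom-up value min(3,1) + min(1,4) = 2 differs from the true metric min over minimal successful attacks of the sum of attribute values, which is 1 (achieved by the attack {b}). -/
/-! The bottom-up algorithm charges the shared leaf `b` once in each `OR` branch, so it pays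
`α b` twice, whereas the single attack `{b}` already satisfies both branches and pays it once.
Every successful attack is nonempty and every leaf costs at least `1`, so `{b}` is optimal. -/

lemma singleton_minimal_of_not_empty {ι : Type*} {f : Finset ι → Prop} {x : ι}
    (hx : f {x}) (h₀ : ¬ f ∅) : f {x} ∧ ∀ B ⊂ {x}, ¬ f B :=
  ⟨hx, fun _ hB => Finset.ssubset_singleton_iff.mp hB ▸ h₀⟩

lemma le_sum_of_nonempty {ι M : Type*} [AddCommMonoid M] [PartialOrder M]
    [IsOrderedAddMonoid M] [CanonicallyOrderedAdd M] {s : Finset ι} {α : ι → M} {m : M}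
    (hs : s.Nonempty) (hm : ∀ x, m ≤ α x) : m ≤ ∑ x ∈ s, α x := by
  obtain ⟨x, hx⟩ := hs
  exact (hm x).trans (Finset.single_le_sum (fun _ _ => zero_le) hx)

/-- bottom-up evaluation can be wrong on DAG-structured static
attack trees.  For `T = AND(OR(a,b), OR(b,c))` with shared leaf `b`,
attribution `α(a)=3, α(b)=1, α(c)=4` and the min-cost domain `(ℕ∞, min, +)`,
the bottom-up value is `min(3,1) + min(1,4) = 2`, whereas the true metric
(the min over minimal successful attacks of the summed attributes) is `1`,
achieved by the attack `{b}`. -/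
theorem stmt10 :
    let α : Fin 3 → ℕ∞ := ![3, 1, 4]
    -- structure function of AND(OR(a,b), OR(b,c)) with a = 0, b = 1, c = 2
    let f : Finset (Fin 3) → Prop := fun A => (0 ∈ A ∨ 1 ∈ A) ∧ (1 ∈ A ∨ 2 ∈ A)
    let minimal : Finset (Fin 3) → Prop := fun A => f A ∧ ∀ B ⊂ A, ¬ f B
    -- bottom-up value
    (min (α 0) (α 1) + min (α 1) (α 2) = 2) ∧
    -- true metric
    (sInf {v : ℕ∞ | ∃ A, minimal A ∧ v = ∑ x ∈ A, α x} = 1) ∧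
    -- witnessed by the minimal attack {b}
    minimal {1} ∧ (∑ x ∈ ({1} : Finset (Fin 3)), α x = 1) ∧
    -- the two values differ
    (2 : ℕ∞) ≠ 1 := by
  intro α f minimal
  have hb : minimal {1} := singleton_minimal_of_not_empty (by simp [f]) (by simp [f])
  have hcost : ∑ x ∈ ({1} : Finset (Fin 3)), α x = 1 := by simp [α]
  refine ⟨by norm_num [α, Matrix.cons_val_two], ?_, hb, hcost, by decide⟩
  refine IsLeast.csInf_eq ⟨⟨{1}, hb, hcost.symm⟩, ?_⟩
  rintro _ ⟨A, ⟨hA, -⟩, rfl⟩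
  have hne : A.Nonempty := hA.1.elim (fun h => ⟨_, h⟩) (fun h => ⟨_, h⟩)
  exact le_sum_of_nonempty hne fun x => by fin_cases x <;> simp [α]
end

section
/- The problem of computing the smallest minimal successful attack of a DAG-structured static attack tree is NP-hard, via reduction from CNF-SAT: a CNF formula φ over atoms a₁,…,aₘ with clauses c₁,…,cₙ is satisfiable if and only if the monotone formula φ̂ = (⋀ᵢ ĉᵢ) ∧ (⋀ₖ (aₖ ∨ āₖ)) — obtained by replacing each negated literal ¬aₖ by a fresh positive atom āₖ in each clause — has a minimum-size satisfying assignment that sets exactly m atoms among {a₁,…,aₘ, ā₁,…,āₘ} to true. -/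
lemma aux_lower (m : ℕ) (S' : Finset (Fin m × Bool))
    (h : ∀ k : Fin m, (k, true) ∈ S' ∨ (k, false) ∈ S') : m ≤ S'.card := by
  have hsub : (Finset.univ : Finset (Fin m)) ⊆ S'.image Prod.fst := by
    intro k _
    rcases h k with hk | hk
    · exact Finset.mem_image.2 ⟨(k, true), hk, rfl⟩
    · exact Finset.mem_image.2 ⟨(k, false), hk, rfl⟩
  calc m = (Finset.univ : Finset (Fin m)).card := by simp
    _ ≤ (S'.image Prod.fst).card := Finset.card_le_card hsub
    _ ≤ S'.card := Finset.card_image_le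

/-- reduction underlying NP-hardness of computing the smallest
minimal attack of a DAG-structured static attack tree.

A CNF formula `φ` over atoms `a₁,…,aₘ` — a literal being a pair `(k, b)`
with `b = true` for the positive literal `aₖ` and `b = false` for `¬aₖ` —
is satisfiable iff the monotone formula
`φ̂ = (⋀ᵢ ĉᵢ) ∧ (⋀ₖ (aₖ ∨ āₖ))`, over the `2m` atoms `(k, true) = aₖ` and
`(k, false) = āₖ` (each negated literal `¬aₖ` being replaced by the fresh
positive atom `āₖ`), has a minimum-size satisfying set of atoms of size
exactly `m`. -/
theorem stmt11 (m : ℕ) (φ : List (List (Fin m × Bool))) :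
    -- φ is satisfiable
    (∃ v : Fin m → Bool, ∀ c ∈ φ, ∃ l ∈ c, v l.1 = l.2) ↔
    -- φ̂ has a satisfying set of atoms of minimum size, of size exactly m
    (∃ S : Finset (Fin m × Bool),
      ((∀ c ∈ φ, ∃ l ∈ c, l ∈ S) ∧ ∀ k : Fin m, (k, true) ∈ S ∨ (k, false) ∈ S) ∧
      S.card = m ∧
      ∀ S' : Finset (Fin m × Bool),
        ((∀ c ∈ φ, ∃ l ∈ c, l ∈ S') ∧ ∀ k : Fin m, (k, true) ∈ S' ∨ (k, false) ∈ S') →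
        S.card ≤ S'.card) := by
  constructor
  · rintro ⟨v, hv⟩
    refine ⟨Finset.univ.image (fun k => (k, v k)), ⟨?_, ?_⟩, ?_, ?_⟩
    · intro c hc
      obtain ⟨l, hl, hvl⟩ := hv c hc
      exact ⟨l, hl, Finset.mem_image.2 ⟨l.1, Finset.mem_univ _, by rw [hvl]⟩⟩
    · intro k
      cases h : v k
      · right; exact Finset.mem_image.2 ⟨k, Finset.mem_univ _, by rw [h]⟩
      · left; exact Finset.mem_image.2 ⟨k, Finset.mem_univ _, by rw [h]⟩
    · rw [Finset.card_image_of_injective _ (fun a b hab => congrArg Prod.fst hab)]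
      simp
    · intro S' ⟨_, hS'⟩
      rw [Finset.card_image_of_injective _ (fun a b hab => congrArg Prod.fst hab)]
      simpa using aux_lower m S' hS'
  · rintro ⟨S, ⟨hc, hk⟩, hcard, _⟩
    have hinj : Set.InjOn Prod.fst (S : Set (Fin m × Bool)) := by
      rw [← Finset.card_image_iff]
      refine le_antisymm Finset.card_image_le ?_
      rw [hcard]
      have hsub : (Finset.univ : Finset (Fin m)) ⊆ S.image Prod.fst := by
        intro k _
        rcases hk k with h | h
        · exact Finset.mem_image.2 ⟨(k, true), h, rfl⟩
        · exact Finset.mem_image.2 ⟨(k, false), h, rfl⟩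
      simpa using Finset.card_le_card hsub
    refine ⟨fun k => decide ((k, true) ∈ S), fun c hcφ => ?_⟩
    obtain ⟨l, hl, hlS⟩ := hc c hcφ
    refine ⟨l, hl, ?_⟩
    obtain ⟨k, b⟩ := l
    cases b
    · simp only [decide_eq_false_iff_not]
      intro htrue
      have := hinj htrue hlS rfl
      simp at this
    · simpa using hlS
end

section
/- For a well-formed tree-structured dynamic attack tree, the minimal attacks of AND(v₁,v₂) are exactly the posets ⟨A₁ ∪ A₂, ≺₁ ∪ ≺₂⟩ where ⟨Aᵢ,≺ᵢ⟩ ranges over the minimal attacks of vᵢ, and the A₁, A₂ are disjoint. -/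
/-- Dynamic attack trees: BAS leaves and (binary) OR, AND, SAND gates. -/
inductive DAT (β : Type) : Type where
  | bas : β → DAT β
  | or : DAT β → DAT β → DAT β
  | and : DAT β → DAT β → DAT β
  | sand : DAT β → DAT β → DAT β

/-- BAS descendants of a node. -/
def DAT.desc {β : Type} : DAT β → Set β
  | .bas a => {a}
  | .or t₁ t₂ => t₁.desc ∪ t₂.desc
  | .and t₁ t₂ => t₁.desc ∪ t₂.desc
  | .sand t₁ t₂ => t₁.desc ∪ t₂.desc

/-- Edge relation of the ordering graph: `x ≺ y` whenever some SAND gate has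
`x` among the BAS descendants of its first child and `y` among those of its
second child. -/
def DAT.ogr {β : Type} : DAT β → β → β → Prop
  | .bas _, _, _ => False
  | .or t₁ t₂, x, y => t₁.ogr x y ∨ t₂.ogr x y
  | .and t₁ t₂, x, y => t₁.ogr x y ∨ t₂.ogr x y
  | .sand t₁ t₂, x, y => t₁.ogr x y ∨ t₂.ogr x y ∨ (x ∈ t₁.desc ∧ y ∈ t₂.desc)

/-- Well-formedness: the ordering graph is acyclic (no directed cycle). -/
def DAT.wellFormed {β : Type} (t : DAT β) : Prop :=
  ∀ x : β, ¬ Relation.TransGen t.ogr x x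

/-- The static attack tree obtained by replacing every SAND gate with AND. -/
def DAT.toStatic {β : Type} : DAT β → SAT β
  | .bas a => .bas a
  | .or t₁ t₂ => .or t₁.toStatic t₂.toStatic
  | .and t₁ t₂ => .and t₁.toStatic t₂.toStatic
  | .sand t₁ t₂ => .and t₁.toStatic t₂.toStatic

/-- Restriction of the ordering-graph edge relation to the set `A`. -/
def DAT.attackRel {β : Type} (t : DAT β) (A : Set β) (x y : β) : Prop :=
  x ∈ A ∧ y ∈ A ∧ t.ogr x y

/-- Pointwise order on binary relations: `relLE r r'` iff `r ⊆ r'`. -/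
def relLE {β : Type} (r r' : β → β → Prop) : Prop := ∀ x y, r x y → r' x y

/-- Strict inclusion of binary relations. -/
def relLT {β : Type} (r r' : β → β → Prop) : Prop := relLE r r' ∧ ¬ relLE r' r

/-- `P = ⟨A,≺⟩` is an attack of `t`: `A` is a set of BAS descendants of `t`
and `≺` is the restriction of the ordering relation of `t` to `A`. -/
def DAT.isAttack {β : Type} (t : DAT β) (P : Set β × (β → β → Prop)) : Prop :=
  P.1 ⊆ t.desc ∧ P.2 = t.attackRel P.1

/-- A successful attack: an attack whose set succeeds in the static tree
obtained by replacing SANDs with ANDs. -/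
def DAT.successful {β : Type} (t : DAT β) (P : Set β × (β → β → Prop)) : Prop :=
  t.isAttack P ∧ (t.toStatic).sf P.1

/-- A minimal attack: successful, and no successful attack has a strictly
smaller set, or a strictly larger order relation. -/
def DAT.minimalAttack {β : Type} (t : DAT β) (P : Set β × (β → β → Prop)) : Prop :=
  t.successful P ∧
    ¬ ∃ Q : Set β × (β → β → Prop), t.successful Q ∧ (Q.1 ⊂ P.1 ∨ relLT P.2 Q.2)

/-- Semantics `⟦t⟧`: the set of minimal attacks (as posets). -/
def DAT.dsem {β : Type} (t : DAT β) : Set (Set β × (β → β → Prop)) :=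
  {P | t.minimalAttack P}

/-- Proper tree structure: the BAS descendants of the two children of any
gate are disjoint. -/
def DAT.isTree {β : Type} : DAT β → Prop
  | .bas _ => True
  | .or t₁ t₂ => t₁.isTree ∧ t₂.isTree ∧ Disjoint t₁.desc t₂.desc
  | .and t₁ t₂ => t₁.isTree ∧ t₂.isTree ∧ Disjoint t₁.desc t₂.desc
  | .sand t₁ t₂ => t₁.isTree ∧ t₂.isTree ∧ Disjoint t₁.desc t₂.desc

lemma ogr_mem_desc {β : Type} (t : DAT β) : ∀ x y : β, t.ogr x y → x ∈ t.desc ∧ y ∈ t.desc := by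
  induction t with
  | bas a => intro x y h; exact h.elim
  | or t₁ t₂ ih₁ ih₂ =>
    intro x y h
    rcases h with h | h
    · exact ⟨Or.inl (ih₁ x y h).1, Or.inl (ih₁ x y h).2⟩
    · exact ⟨Or.inr (ih₂ x y h).1, Or.inr (ih₂ x y h).2⟩
  | and t₁ t₂ ih₁ ih₂ =>
    intro x y h
    rcases h with h | h
    · exact ⟨Or.inl (ih₁ x y h).1, Or.inl (ih₁ x y h).2⟩
    · exact ⟨Or.inr (ih₂ x y h).1, Or.inr (ih₂ x y h).2⟩
  | sand t₁ t₂ ih₁ ih₂ =>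
    intro x y h
    rcases h with h | h | ⟨hx, hy⟩
    · exact ⟨Or.inl (ih₁ x y h).1, Or.inl (ih₁ x y h).2⟩
    · exact ⟨Or.inr (ih₂ x y h).1, Or.inr (ih₂ x y h).2⟩
    · exact ⟨Or.inl hx, Or.inr hy⟩

lemma sf_congr {β : Type} (t : DAT β) : ∀ A B : Set β, A ∩ t.desc = B ∩ t.desc →
    (t.toStatic.sf A ↔ t.toStatic.sf B) := by
  induction t with
  | bas a =>
    intro A B h
    simp only [DAT.toStatic, SAT.sf]
    have := Set.ext_iff.mp h a
    simpa [DAT.desc] using this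
  | or t₁ t₂ ih₁ ih₂ =>
    intro A B h
    have h₁ : A ∩ t₁.desc = B ∩ t₁.desc := by
      ext z
      have hz := Set.ext_iff.mp h z
      simp only [DAT.desc, Set.mem_inter_iff, Set.mem_union] at hz ⊢
      tauto
    have h₂ : A ∩ t₂.desc = B ∩ t₂.desc := by
      ext z
      have hz := Set.ext_iff.mp h z
      simp only [DAT.desc, Set.mem_inter_iff, Set.mem_union] at hz ⊢
      tauto
    simp only [DAT.toStatic, SAT.sf]
    exact or_congr (ih₁ A B h₁) (ih₂ A B h₂)
  | and t₁ t₂ ih₁ ih₂ =>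
    intro A B h
    have h₁ : A ∩ t₁.desc = B ∩ t₁.desc := by
      ext z
      have hz := Set.ext_iff.mp h z
      simp only [DAT.desc, Set.mem_inter_iff, Set.mem_union] at hz ⊢
      tauto
    have h₂ : A ∩ t₂.desc = B ∩ t₂.desc := by
      ext z
      have hz := Set.ext_iff.mp h z
      simp only [DAT.desc, Set.mem_inter_iff, Set.mem_union] at hz ⊢
      tauto
    simp only [DAT.toStatic, SAT.sf]
    exact and_congr (ih₁ A B h₁) (ih₂ A B h₂)
  | sand t₁ t₂ ih₁ ih₂ =>
    intro A B h
    have h₁ : A ∩ t₁.desc = B ∩ t₁.desc := by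
      ext z
      have hz := Set.ext_iff.mp h z
      simp only [DAT.desc, Set.mem_inter_iff, Set.mem_union] at hz ⊢
      tauto
    have h₂ : A ∩ t₂.desc = B ∩ t₂.desc := by
      ext z
      have hz := Set.ext_iff.mp h z
      simp only [DAT.desc, Set.mem_inter_iff, Set.mem_union] at hz ⊢
      tauto
    simp only [DAT.toStatic, SAT.sf]
    exact and_congr (ih₁ A B h₁) (ih₂ A B h₂)

lemma sf_inter {β : Type} (t : DAT β) (A : Set β) :
    t.toStatic.sf (A ∩ t.desc) ↔ t.toStatic.sf A :=
  sf_congr t _ A (by rw [Set.inter_assoc, Set.inter_self])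

lemma attackRel_restrict {β : Type} (v : DAT β) (A : Set β) :
    v.attackRel A = v.attackRel (A ∩ v.desc) := by
  funext x y
  apply propext
  constructor
  · rintro ⟨hx, hy, hr⟩
    obtain ⟨dx, dy⟩ := ogr_mem_desc v x y hr
    exact ⟨⟨hx, dx⟩, ⟨hy, dy⟩, hr⟩
  · rintro ⟨hx, hy, hr⟩
    exact ⟨hx.1, hy.1, hr⟩

lemma attackRel_and_iff {β : Type} (v₁ v₂ : DAT β) (A : Set β) (x y : β) :
    (DAT.and v₁ v₂).attackRel A x y ↔ v₁.attackRel A x y ∨ v₂.attackRel A x y := by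
  simp only [DAT.attackRel, DAT.ogr]; tauto

lemma union_inter_left' {β : Type} {D₁ D₂ A₁ A₂ : Set β} (hd : Disjoint D₁ D₂)
    (h1 : A₁ ⊆ D₁) (h2 : A₂ ⊆ D₂) : (A₁ ∪ A₂) ∩ D₁ = A₁ := by
  ext z
  constructor
  · rintro ⟨hz | hz, hD⟩
    · exact hz
    · exact absurd hD (Set.disjoint_right.mp hd (h2 hz))
  · intro hz; exact ⟨Or.inl hz, h1 hz⟩

lemma union_inter_right' {β : Type} {D₁ D₂ A₁ A₂ : Set β} (hd : Disjoint D₁ D₂)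
    (h1 : A₁ ⊆ D₁) (h2 : A₂ ⊆ D₂) : (A₁ ∪ A₂) ∩ D₂ = A₂ := by
  rw [Set.union_comm]
  exact union_inter_left' hd.symm h2 h1

lemma lift_succ {β : Type} (v₁ v₂ : DAT β) (hd : Disjoint v₁.desc v₂.desc)
    {A₁ A₂ : Set β} (h1 : A₁ ⊆ v₁.desc) (h2 : A₂ ⊆ v₂.desc)
    (s1 : v₁.toStatic.sf A₁) (s2 : v₂.toStatic.sf A₂) :
    (DAT.and v₁ v₂).successful (A₁ ∪ A₂, (DAT.and v₁ v₂).attackRel (A₁ ∪ A₂)) := by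
  refine ⟨⟨?_, rfl⟩, ?_, ?_⟩
  · show A₁ ∪ A₂ ⊆ v₁.desc ∪ v₂.desc
    exact Set.union_subset (h1.trans Set.subset_union_left) (h2.trans Set.subset_union_right)
  · show v₁.toStatic.sf (A₁ ∪ A₂)
    rw [← sf_inter v₁, union_inter_left' hd h1 h2]
    exact s1
  · show v₂.toStatic.sf (A₁ ∪ A₂)
    rw [← sf_inter v₂, union_inter_right' hd h1 h2]
    exact s2

/-- for well-formed tree-structured dynamic attack trees, the
minimal attacks of `AND(v₁,v₂)` are exactly the posets `⟨A₁ ∪ A₂, ≺₁ ∪ ≺₂⟩`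
for minimal attacks `⟨Aᵢ,≺ᵢ⟩` of `vᵢ`, with `A₁, A₂` disjoint. -/
theorem stmt14 {β : Type} (v₁ v₂ : DAT β)
    (ht : (DAT.and v₁ v₂).isTree) (hwf : (DAT.and v₁ v₂).wellFormed) :
    (DAT.and v₁ v₂).dsem =
      {P | ∃ A₁ r₁ A₂ r₂, (A₁, r₁) ∈ v₁.dsem ∧ (A₂, r₂) ∈ v₂.dsem ∧
        Disjoint A₁ A₂ ∧ P = (A₁ ∪ A₂, fun x y => r₁ x y ∨ r₂ x y)} := by
  obtain ⟨ht₁, ht₂, hd⟩ := ht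
  ext P
  simp only [DAT.dsem, Set.mem_setOf_eq]
  constructor
  · rintro ⟨⟨⟨hsub, hrel⟩, hsf⟩, hmin⟩
    have hsub' : P.1 ⊆ v₁.desc ∪ v₂.desc := hsub
    have hsf₁ : v₁.toStatic.sf P.1 := hsf.1
    have hsf₂ : v₂.toStatic.sf P.1 := hsf.2
    refine ⟨P.1 ∩ v₁.desc, v₁.attackRel (P.1 ∩ v₁.desc),
           P.1 ∩ v₂.desc, v₂.attackRel (P.1 ∩ v₂.desc), ?_, ?_, ?_, ?_⟩
    · -- minimal attack of v₁
      refine ⟨⟨⟨Set.inter_subset_right, rfl⟩, (sf_inter v₁ P.1).mpr hsf₁⟩, ?_⟩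
      rintro ⟨Q, ⟨⟨hQsub, hQrel⟩, hQsf⟩, hbad⟩
      apply hmin
      refine ⟨(Q.1 ∪ P.1 ∩ v₂.desc, (DAT.and v₁ v₂).attackRel (Q.1 ∪ P.1 ∩ v₂.desc)),
        lift_succ v₁ v₂ hd hQsub Set.inter_subset_right hQsf ((sf_inter v₂ P.1).mpr hsf₂), ?_⟩
      have e1 : (Q.1 ∪ P.1 ∩ v₂.desc) ∩ v₁.desc = Q.1 :=
        union_inter_left' hd hQsub Set.inter_subset_right
      have e2 : (Q.1 ∪ P.1 ∩ v₂.desc) ∩ v₂.desc = P.1 ∩ v₂.desc :=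
        union_inter_right' hd hQsub Set.inter_subset_right
      have hT : ∀ x y, (DAT.and v₁ v₂).attackRel (Q.1 ∪ P.1 ∩ v₂.desc) x y ↔
          (v₁.attackRel Q.1 x y ∨ v₂.attackRel (P.1 ∩ v₂.desc) x y) := by
        intro x y
        rw [attackRel_and_iff, attackRel_restrict v₁ (Q.1 ∪ P.1 ∩ v₂.desc),
          attackRel_restrict v₂ (Q.1 ∪ P.1 ∩ v₂.desc), e1, e2]
      rcases hbad with hlt | hlt
      · left
        rw [Set.ssubset_def] at hlt ⊢
        obtain ⟨hQle, hne⟩ := hlt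
        constructor
        · intro z hz
          rcases hz with hz | hz
          · exact (hQle hz).1
          · exact hz.1
        · intro hcon
          obtain ⟨x, hxA, hxQ⟩ := Set.not_subset.mp hne
          rcases hcon hxA.1 with h | h
          · exact hxQ h
          · exact Set.disjoint_left.mp hd hxA.2 h.2
      · right
        have hQ2 : Q.2 = v₁.attackRel Q.1 := hQrel
        rw [hQ2] at hlt
        have hT' : ∀ x y, (DAT.and v₁ v₂).attackRel P.1 x y ↔
            (v₁.attackRel (P.1 ∩ v₁.desc) x y ∨ v₂.attackRel (P.1 ∩ v₂.desc) x y) := by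
          intro x y
          rw [attackRel_and_iff, attackRel_restrict v₁ P.1, attackRel_restrict v₂ P.1]
        constructor
        · intro x y h
          rw [hrel] at h
          rcases (hT' x y).mp h with h' | h'
          · exact (hT x y).mpr (Or.inl (hlt.1 x y h'))
          · exact (hT x y).mpr (Or.inr h')
        · intro hcon
          apply hlt.2
          intro x y hq
          have hx : x ∈ v₁.desc := (ogr_mem_desc v₁ x y hq.2.2).1
          have hPxy := hcon x y ((hT x y).mpr (Or.inl hq))
          rw [hrel] at hPxy
          rcases (hT' x y).mp hPxy with h' | h'
          · exact h'
          · exact absurd hx (Set.disjoint_right.mp hd (ogr_mem_desc v₂ x y h'.2.2).1)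
    · -- minimal attack of v₂
      refine ⟨⟨⟨Set.inter_subset_right, rfl⟩, (sf_inter v₂ P.1).mpr hsf₂⟩, ?_⟩
      rintro ⟨Q, ⟨⟨hQsub, hQrel⟩, hQsf⟩, hbad⟩
      apply hmin
      refine ⟨(P.1 ∩ v₁.desc ∪ Q.1, (DAT.and v₁ v₂).attackRel (P.1 ∩ v₁.desc ∪ Q.1)),
        lift_succ v₁ v₂ hd Set.inter_subset_right hQsub ((sf_inter v₁ P.1).mpr hsf₁) hQsf, ?_⟩
      have e1 : (P.1 ∩ v₁.desc ∪ Q.1) ∩ v₁.desc = P.1 ∩ v₁.desc :=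
        union_inter_left' hd Set.inter_subset_right hQsub
      have e2 : (P.1 ∩ v₁.desc ∪ Q.1) ∩ v₂.desc = Q.1 :=
        union_inter_right' hd Set.inter_subset_right hQsub
      have hT : ∀ x y, (DAT.and v₁ v₂).attackRel (P.1 ∩ v₁.desc ∪ Q.1) x y ↔
          (v₁.attackRel (P.1 ∩ v₁.desc) x y ∨ v₂.attackRel Q.1 x y) := by
        intro x y
        rw [attackRel_and_iff, attackRel_restrict v₁ (P.1 ∩ v₁.desc ∪ Q.1),
          attackRel_restrict v₂ (P.1 ∩ v₁.desc ∪ Q.1), e1, e2]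
      rcases hbad with hlt | hlt
      · left
        rw [Set.ssubset_def] at hlt ⊢
        obtain ⟨hQle, hne⟩ := hlt
        constructor
        · intro z hz
          rcases hz with hz | hz
          · exact hz.1
          · exact (hQle hz).1
        · intro hcon
          obtain ⟨x, hxA, hxQ⟩ := Set.not_subset.mp hne
          rcases hcon hxA.1 with h | h
          · exact Set.disjoint_right.mp hd hxA.2 h.2
          · exact hxQ h
      · right
        have hQ2 : Q.2 = v₂.attackRel Q.1 := hQrel
        rw [hQ2] at hlt
        have hT' : ∀ x y, (DAT.and v₁ v₂).attackRel P.1 x y ↔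
            (v₁.attackRel (P.1 ∩ v₁.desc) x y ∨ v₂.attackRel (P.1 ∩ v₂.desc) x y) := by
          intro x y
          rw [attackRel_and_iff, attackRel_restrict v₁ P.1, attackRel_restrict v₂ P.1]
        constructor
        · intro x y h
          rw [hrel] at h
          rcases (hT' x y).mp h with h' | h'
          · exact (hT x y).mpr (Or.inl h')
          · exact (hT x y).mpr (Or.inr (hlt.1 x y h'))
        · intro hcon
          apply hlt.2
          intro x y hq
          have hx : x ∈ v₂.desc := (ogr_mem_desc v₂ x y hq.2.2).1
          have hPxy := hcon x y ((hT x y).mpr (Or.inr hq))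
          rw [hrel] at hPxy
          rcases (hT' x y).mp hPxy with h' | h'
          · exact absurd hx (Set.disjoint_left.mp hd (ogr_mem_desc v₁ x y h'.2.2).1)
          · exact h'
    · exact hd.mono Set.inter_subset_right Set.inter_subset_right
    · -- P = (A₁ ∪ A₂, r₁ ∪ r₂)
      have hP1 : P.1 = P.1 ∩ v₁.desc ∪ P.1 ∩ v₂.desc := by
        ext z
        constructor
        · intro hz
          rcases hsub' hz with h | h
          · exact Or.inl ⟨hz, h⟩
          · exact Or.inr ⟨hz, h⟩
        · rintro (⟨h, _⟩ | ⟨h, _⟩) <;> exact h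
      have hP2 : P.2 = fun x y =>
          v₁.attackRel (P.1 ∩ v₁.desc) x y ∨ v₂.attackRel (P.1 ∩ v₂.desc) x y := by
        funext x y
        rw [hrel]
        apply propext
        rw [← attackRel_restrict v₁ P.1, ← attackRel_restrict v₂ P.1]
        exact attackRel_and_iff v₁ v₂ P.1 x y
      exact Prod.ext hP1 hP2
  · rintro ⟨A₁, r₁, A₂, r₂, h1, h2, hA, hP⟩
    obtain ⟨⟨⟨h1sub, h1rel⟩, h1sf⟩, h1min⟩ := h1
    obtain ⟨⟨⟨h2sub, h2rel⟩, h2sf⟩, h2min⟩ := h2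
    have h1sub : A₁ ⊆ v₁.desc := h1sub
    have h2sub : A₂ ⊆ v₂.desc := h2sub
    have h1rel' : r₁ = v₁.attackRel A₁ := h1rel
    have h2rel' : r₂ = v₂.attackRel A₂ := h2rel
    subst hP
    subst h1rel'
    subst h2rel'
    have h1sf : v₁.toStatic.sf A₁ := h1sf
    have h2sf : v₂.toStatic.sf A₂ := h2sf
    have e1 : (A₁ ∪ A₂) ∩ v₁.desc = A₁ := union_inter_left' hd h1sub h2sub
    have e2 : (A₁ ∪ A₂) ∩ v₂.desc = A₂ := union_inter_right' hd h1sub h2sub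
    have hrel : (fun x y => v₁.attackRel A₁ x y ∨ v₂.attackRel A₂ x y) =
        (DAT.and v₁ v₂).attackRel (A₁ ∪ A₂) := by
      funext x y
      apply propext
      rw [attackRel_and_iff, attackRel_restrict v₁ (A₁ ∪ A₂),
        attackRel_restrict v₂ (A₁ ∪ A₂), e1, e2]
    refine ⟨⟨⟨?_, hrel⟩, ?_, ?_⟩, ?_⟩
    · show A₁ ∪ A₂ ⊆ v₁.desc ∪ v₂.desc
      exact Set.union_subset (h1sub.trans Set.subset_union_left)
        (h2sub.trans Set.subset_union_right)
    · show v₁.toStatic.sf (A₁ ∪ A₂)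
      rw [← sf_inter v₁, e1]; exact h1sf
    · show v₂.toStatic.sf (A₁ ∪ A₂)
      rw [← sf_inter v₂, e2]; exact h2sf
    · rintro ⟨Q, ⟨⟨hQsub, hQrel⟩, hQsf⟩, hbad⟩
      have hQsub' : Q.1 ⊆ v₁.desc ∪ v₂.desc := hQsub
      have s1 : v₁.successful (Q.1 ∩ v₁.desc, v₁.attackRel (Q.1 ∩ v₁.desc)) :=
        ⟨⟨Set.inter_subset_right, rfl⟩, (sf_inter v₁ Q.1).mpr hQsf.1⟩
      have s2 : v₂.successful (Q.1 ∩ v₂.desc, v₂.attackRel (Q.1 ∩ v₂.desc)) :=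
        ⟨⟨Set.inter_subset_right, rfl⟩, (sf_inter v₂ Q.1).mpr hQsf.2⟩
      rcases hbad with hlt | hlt
      · rw [Set.ssubset_def] at hlt
        obtain ⟨hQle, hne⟩ := hlt
        obtain ⟨x, hxP, hxQ⟩ := Set.not_subset.mp hne
        have hxP : x ∈ A₁ ∪ A₂ := hxP
        have hsubQ1 : Q.1 ∩ v₁.desc ⊆ A₁ := by
          intro z hz
          rcases hQle hz.1 with h | h
          · exact h
          · exact absurd hz.2 (Set.disjoint_right.mp hd (h2sub h))
        have hsubQ2 : Q.1 ∩ v₂.desc ⊆ A₂ := by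
          intro z hz
          rcases hQle hz.1 with h | h
          · exact absurd hz.2 (Set.disjoint_left.mp hd (h1sub h))
          · exact h
        rcases hxP with hx1 | hx2
        · apply h1min
          refine ⟨(Q.1 ∩ v₁.desc, v₁.attackRel (Q.1 ∩ v₁.desc)), s1, Or.inl ?_⟩
          rw [Set.ssubset_def]
          exact ⟨hsubQ1, fun hcon => hxQ (hcon hx1).1⟩
        · apply h2min
          refine ⟨(Q.1 ∩ v₂.desc, v₂.attackRel (Q.1 ∩ v₂.desc)), s2, Or.inl ?_⟩
          rw [Set.ssubset_def]
          exact ⟨hsubQ2, fun hcon => hxQ (hcon hx2).1⟩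
      · have hQ2 : Q.2 = (DAT.and v₁ v₂).attackRel Q.1 := hQrel
        rw [hQ2] at hlt
        have hT : ∀ x y, (DAT.and v₁ v₂).attackRel Q.1 x y ↔
            (v₁.attackRel (Q.1 ∩ v₁.desc) x y ∨ v₂.attackRel (Q.1 ∩ v₂.desc) x y) := by
          intro x y
          rw [attackRel_and_iff, attackRel_restrict v₁ Q.1, attackRel_restrict v₂ Q.1]
        have hle₁ : relLE (v₁.attackRel A₁) (v₁.attackRel (Q.1 ∩ v₁.desc)) := by
          intro x y h
          have hx := (ogr_mem_desc v₁ x y h.2.2).1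
          rcases (hT x y).mp (hlt.1 x y (Or.inl h)) with h' | h'
          · exact h'
          · exact absurd hx (Set.disjoint_right.mp hd (ogr_mem_desc v₂ x y h'.2.2).1)
        have hle₂ : relLE (v₂.attackRel A₂) (v₂.attackRel (Q.1 ∩ v₂.desc)) := by
          intro x y h
          have hx := (ogr_mem_desc v₂ x y h.2.2).1
          rcases (hT x y).mp (hlt.1 x y (Or.inr h)) with h' | h'
          · exact absurd hx (Set.disjoint_left.mp hd (ogr_mem_desc v₁ x y h'.2.2).1)
          · exact h'
        obtain ⟨x, y, hQxy, hnP⟩ : ∃ x y, (DAT.and v₁ v₂).attackRel Q.1 x y ∧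
            ¬ (v₁.attackRel A₁ x y ∨ v₂.attackRel A₂ x y) := by
          by_contra hcon
          push_neg at hcon
          exact hlt.2 fun x y h => hcon x y h
        rcases (hT x y).mp hQxy with h' | h'
        · apply h1min
          refine ⟨(Q.1 ∩ v₁.desc, v₁.attackRel (Q.1 ∩ v₁.desc)), s1, Or.inr ?_⟩
          exact ⟨hle₁, fun hcon => hnP (Or.inl (hcon x y h'))⟩
        · apply h2min
          refine ⟨(Q.1 ∩ v₂.desc, v₂.attackRel (Q.1 ∩ v₂.desc)), s2, Or.inr ?_⟩
          exact ⟨hle₂, fun hcon => hnP (Or.inr (hcon x y h'))⟩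
end
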